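/- Fix natural numbers k and r. Define the extended decoding-success probability P_s(k,n,r) to be 0 if r < k, the product ∏_{l=0}^{n−r−1} (1 − 2^{l−(n−k)}) if k ≤ r ≤ n, and 1 if r > n. Then for any n₁ ≤ n₂ (with k ≤ n₁, k ≤ n₂), P_s(k, n₂, r) ≤ P_s(k, n₁, r); that is, P_s(k, n, r) is monotone decreasing in n. -/

import Mathlib

/-!
For `k ≤ r ≤ n`, raising `n` by one shifts every exponent `l - (n - k)` down by one, so the
product for `n + 1` is the product for `n` times one extra factor `1 - 2^{-(n + 1 - k)} ∈ [0, 1]`.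
Outside that range `P_s` is `0` (for `r < k`) or `1` (for `r > n`), and `0 ≤ P_s ≤ 1`
settles the remaining comparisons, so `P_s(k, n, r)` is antitone in `n`.
-/

/-- The extended decoding-success probability of a random binary linear `(n,k)` code
given `r` received symbols: `0` if `r < k`, `∏_{l=0}^{n−r−1} (1 − 2^{l−(n−k)})` if
`k ≤ r ≤ n`, and `1` if `r > n`. -/
noncomputable def Ps (k n r : ℕ) : ℝ :=
  if r < k then 0
  else if r ≤ n then
    ∏ l ∈ Finset.range (n - r), (1 - (2 : ℝ) ^ ((l : ℤ) - ((n : ℤ) - (k : ℤ))))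
  else 1

lemma one_sub_two_zpow_nonneg {e : ℤ} (he : e ≤ 0) : 0 ≤ 1 - (2 : ℝ) ^ e :=
  sub_nonneg.mpr (zpow_le_one_of_nonpos₀ one_le_two he)

lemma one_sub_two_zpow_le_one (e : ℤ) : 1 - (2 : ℝ) ^ e ≤ 1 :=
  sub_le_self _ (zpow_pos (two_pos : (0 : ℝ) < 2) e).le

namespace Ps

variable {k n r : ℕ}

lemma eq_zero_of_lt (hrk : r < k) : Ps k n r = 0 := if_pos hrk

lemma eq_one_of_lt (hkr : k ≤ r) (hnr : n < r) : Ps k n r = 1 := by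
  rw [Ps, if_neg hkr.not_gt, if_neg hnr.not_ge]

lemma eq_prod (hkr : k ≤ r) (hrn : r ≤ n) :
    Ps k n r = ∏ l ∈ Finset.range (n - r), (1 - (2 : ℝ) ^ ((l : ℤ) - ((n : ℤ) - (k : ℤ)))) := by
  rw [Ps, if_neg hkr.not_gt, if_pos hrn]

lemma nonneg (k n r : ℕ) : 0 ≤ Ps k n r := by
  rcases lt_or_ge r k with hrk | hkr
  · exact (eq_zero_of_lt hrk).ge
  rcases lt_or_ge n r with hnr | hrn
  · exact (eq_one_of_lt hkr hnr).ge.trans' zero_le_one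
  rw [eq_prod hkr hrn]
  refine Finset.prod_nonneg fun l hl => one_sub_two_zpow_nonneg ?_
  have := Finset.mem_range.mp hl
  omega

lemma le_one (k n r : ℕ) : Ps k n r ≤ 1 := by
  rcases lt_or_ge r k with hrk | hkr
  · exact (eq_zero_of_lt hrk).le.trans zero_le_one
  rcases lt_or_ge n r with hnr | hrn
  · exact (eq_one_of_lt hkr hnr).le
  rw [eq_prod hkr hrn]
  refine Finset.prod_le_one (fun l hl => one_sub_two_zpow_nonneg ?_)
    fun l _ => one_sub_two_zpow_le_one _
  have := Finset.mem_range.mp hl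
  omega

lemma succ_eq_mul (hkr : k ≤ r) (hrn : r ≤ n) :
    Ps k (n + 1) r = Ps k n r * (1 - (2 : ℝ) ^ (-((n : ℤ) + 1 - k))) := by
  rw [eq_prod hkr (by omega), eq_prod hkr hrn, Nat.sub_add_comm hrn,
    Finset.prod_range_succ']
  congr 1
  · refine Finset.prod_congr rfl fun l _ => ?_
    push_cast
    ring_nf
  · push_cast
    ring_nf

lemma succ_le (k n r : ℕ) : Ps k (n + 1) r ≤ Ps k n r := by
  rcases lt_or_ge r k with hrk | hkr
  · rw [eq_zero_of_lt hrk, eq_zero_of_lt hrk]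
  rcases lt_or_ge n r with hnr | hrn
  · exact (eq_one_of_lt hkr hnr).symm ▸ le_one k (n + 1) r
  rw [succ_eq_mul hkr hrn]
  exact mul_le_of_le_one_right (nonneg k n r) (one_sub_two_zpow_le_one _)

end Ps

theorem Ps_antitone_in_n (k r n₁ n₂ : ℕ) (h : n₁ ≤ n₂) :
    Ps k n₂ r ≤ Ps k n₁ r :=
  antitone_nat_of_succ_le (f := fun n => Ps k n r) (fun n => Ps.succ_le k n r) h
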